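/- For the hard-core model on the 2K×3L triangular grid Λ, the set of stable configurations (global minimizers of the energy H on the set X of hard-core configurations) is exactly {a, b, c}: H(a) = H(b) = H(c) = −2KL, and every hard-core configuration σ ∈ X with σ ∉ {a, b, c} satisfies H(σ) > −2KL. -/

import Mathlib

open Finset

variable (K L : ℕ) [NeZero K] [NeZero L]

/-- Vertices of the `2K × 3L` triangular grid: pairs `(i,j) ∈ (ℤ/2K) × (ℤ/6L)` with `i+j` even. -/
abbrev Vert (K L : ℕ) [NeZero K] [NeZero L] : Type :=
  {p : ZMod (2 * K) × ZMod (6 * L) // (p.1.val + p.2.val) % 2 = 0}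

/-- Adjacency in the triangular grid with periodic boundary conditions. -/
abbrev Adj (v w : Vert K L) : Prop :=
  (w.1.1 = v.1.1 ∧ (w.1.2 = v.1.2 + 2 ∨ w.1.2 = v.1.2 - 2)) ∨
  ((w.1.1 = v.1.1 + 1 ∨ w.1.1 = v.1.1 - 1) ∧ (w.1.2 = v.1.2 + 1 ∨ w.1.2 = v.1.2 - 1))

/-- A particle configuration on the grid. -/
abbrev Cfg (K L : ℕ) [NeZero K] [NeZero L] : Type := Vert K L → Bool

/-- Hard-core condition: no two adjacent occupied sites. -/
abbrev HardCore (σ : Cfg K L) : Prop :=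
  ∀ v w : Vert K L, Adj K L v w → ¬(σ v = true ∧ σ w = true)

/-- Number of particles of a configuration. -/
def nParticles (σ : Cfg K L) : ℕ := (univ.filter fun v => σ v = true).card

/-- The energy (Hamiltonian) `H(σ) = -Σ_v σ(v)`. -/
def energy (σ : Cfg K L) : ℤ := -(nParticles K L σ : ℤ)

/-- The configuration `a`: indicator of `Λ_a` (columns `j ≡ 0 (mod 3)`). -/
def confA : Cfg K L := fun v => decide (v.1.2.val % 3 = 0)

/-- The configuration `b`: indicator of `Λ_b` (columns `j ≡ 1 (mod 3)`). -/
def confB : Cfg K L := fun v => decide (v.1.2.val % 3 = 1)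

/-- The configuration `c`: indicator of `Λ_c` (columns `j ≡ 2 (mod 3)`). -/
def confC : Cfg K L := fun v => decide (v.1.2.val % 3 = 2)

/-- A path in the energy landscape: a finite sequence of hard-core configurations,
consecutive ones differing in at most one vertex. -/
structure HCPath (σ σ' : Cfg K L) where
  n : ℕ
  ω : Fin (n + 1) → Cfg K L
  first : ω 0 = σ
  last : ω (Fin.last n) = σ'
  hc : ∀ i, HardCore K L (ω i)
  step : ∀ i : Fin n,
    ((univ : Finset (Vert K L)).filter fun v => ω i.castSucc v ≠ ω i.succ v).card ≤ 1

/-- Height of a path: maximal energy along it. -/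
noncomputable def pathHeight {σ σ' : Cfg K L} (p : HCPath K L σ σ') : ℤ :=
  Finset.univ.sup' Finset.univ_nonempty fun i => energy K L (p.ω i)

/-- Communication height `Φ(σ,σ')`: minimal height over all paths from `σ` to `σ'`. -/
noncomputable def commHeight (σ σ' : Cfg K L) : ℤ :=
  sInf {h : ℤ | ∃ p : HCPath K L σ σ', pathHeight K L p = h}

/-- The horizontal stripe `S_i = r_{2i} ∪ r_{2i+1}`. -/
abbrev inHStripe (i : ℕ) (v : Vert K L) : Prop :=
  v.1.1 = ((2 * i : ℕ) : ZMod (2 * K)) ∨ v.1.1 = ((2 * i + 1 : ℕ) : ZMod (2 * K))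

/-- The vertical stripe `C_j = c_j ∪ c_{j+1} ∪ c_{j+2}` (column indices mod `6L`). -/
abbrev inVStripe (j : ℕ) (v : Vert K L) : Prop :=
  v.1.2 = ((j : ℕ) : ZMod (6 * L)) ∨ v.1.2 = ((j + 1 : ℕ) : ZMod (6 * L)) ∨
    v.1.2 = ((j + 2 : ℕ) : ZMod (6 * L))

/-- Two configurations agree on a region. -/
def agreesOn (P : Vert K L → Prop) (σ τ : Cfg K L) : Prop := ∀ v, P v → σ v = τ v


/-!
The vertices with `i + j` even form an index-2 subgroup of `ℤ/2K × ℤ/6L`, so `Λ` is a finite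
abelian group with `6KL` elements, and translations are graph automorphisms. With
`e₁ = (1,1)`, `e₂ = (-1,1)`, the up-triangles `{v, v + e₁, v + e₁ + e₂}` and the down-triangles
`{v, v + e₂, v + e₁ + e₂}` are cliques, and every vertex lies in three triangles of each kind.
Hence a hard-core configuration has at most `6KL / 3 = 2KL` particles, and at equality every
triangle holds exactly one particle. Then each particle at `v` forces particles at
`v + 2e₁ + e₂` and `v + e₁ + 2e₂`; on a finite group this makes both vectors periods of `σ`.
They generate the subgroup `{j ≡ 0 mod 3}`, so the occupied set is a union of cosets of it,
and the hard-core condition leaves room for only one coset: `Λ_a`, `Λ_b` or `Λ_c`.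
-/

lemma ZMod.val_castHom {m n : ℕ} [NeZero m] (h : n ∣ m) (x : ZMod m) :
    (ZMod.castHom h (ZMod n) x).val = x.val % n := by
  rw [ZMod.castHom_apply, ZMod.cast_eq_val, ZMod.val_natCast]

def parityHom : ZMod (2 * K) × ZMod (6 * L) →+ ZMod 2 :=
  ((ZMod.castHom (dvd_mul_right 2 K) (ZMod 2)).toAddMonoidHom.comp (AddMonoidHom.fst _ _)) +
    (ZMod.castHom (dvd_mul_of_dvd_left (by norm_num : 2 ∣ 6) L) (ZMod 2)).toAddMonoidHom.comp
      (AddMonoidHom.snd _ _)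

omit [NeZero K] [NeZero L] in
lemma parityHom_apply (p : ZMod (2 * K) × ZMod (6 * L)) :
    parityHom K L p = ZMod.castHom (dvd_mul_right 2 K) (ZMod 2) p.1 +
      ZMod.castHom (dvd_mul_of_dvd_left (by norm_num : 2 ∣ 6) L) (ZMod 2) p.2 :=
  rfl

lemma parityHom_eq_zero_iff (p : ZMod (2 * K) × ZMod (6 * L)) :
    parityHom K L p = 0 ↔ (p.1.val + p.2.val) % 2 = 0 := by
  rw [← ZMod.val_eq_zero, parityHom_apply, ZMod.val_add, ZMod.val_castHom, ZMod.val_castHom,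
    ← Nat.add_mod]

-- `copy` makes the carrier literally the predicate defining `Vert`, so that `Vert K L` is this
-- subgroup as a type.
def evenSubgroup : AddSubgroup (ZMod (2 * K) × ZMod (6 * L)) :=
  (parityHom K L).ker.copy {p | (p.1.val + p.2.val) % 2 = 0}
    (Set.ext fun p => (parityHom_eq_zero_iff K L p).symm)

instance : AddCommGroup (Vert K L) := (evenSubgroup K L).toAddCommGroup

lemma card_vert : Fintype.card (Vert K L) = 6 * K * L := by
  have hsurj : Function.Surjective (parityHom K L) := fun x =>
    ⟨((x.val : ZMod (2 * K)), 0), by simp [parityHom]⟩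
  have h := (parityHom K L).ker.card_mul_index
  rw [AddSubgroup.index_ker, AddMonoidHom.range_eq_top.2 hsurj, AddSubgroup.card_top,
    Nat.card_congr (Equiv.subtypeEquivRight fun p => (parityHom K L).mem_ker.trans
      (parityHom_eq_zero_iff K L p))] at h
  simp only [Nat.card_prod, Nat.card_zmod] at h
  have h' : Nat.card (Vert K L) * 2 = 2 * K * (6 * L) := h
  rw [← Nat.card_eq_fintype_card]
  linarith

def e₁ : Vert K L :=
  ⟨(1, 1), (parityHom_eq_zero_iff K L _).1 (by rw [parityHom_apply, map_one, map_one]; rfl)⟩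

def e₂ : Vert K L :=
  ⟨(-1, 1), (parityHom_eq_zero_iff K L _).1
    (by rw [parityHom_apply, map_neg, map_one, map_one, neg_add_cancel])⟩

@[simp] lemma Vert.coe_add (v w : Vert K L) : (v + w).1 = v.1 + w.1 := rfl

@[simp] lemma Vert.coe_zsmul (k : ℤ) (v : Vert K L) : (k • v).1 = k • v.1 := rfl

lemma adj_add_e₁ (v : Vert K L) : Adj K L v (v + e₁ K L) := Or.inr ⟨Or.inl rfl, Or.inl rfl⟩

lemma adj_add_e₂ (v : Vert K L) : Adj K L v (v + e₂ K L) :=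
  Or.inr ⟨Or.inr (sub_eq_add_neg _ _).symm, Or.inl rfl⟩

lemma adj_add_e₁_add_e₂ (v : Vert K L) : Adj K L v (v + (e₁ K L + e₂ K L)) :=
  Or.inl ⟨by simp [e₁, e₂], Or.inl (by simp [e₁, e₂, one_add_one_eq_two])⟩

def residue : Vert K L →+ ZMod 3 :=
  ((ZMod.castHom (dvd_mul_of_dvd_left (by norm_num : 3 ∣ 6) L) (ZMod 3)).toAddMonoidHom.comp
    (AddMonoidHom.snd _ _)).comp (evenSubgroup K L).subtype

lemma residue_apply (v : Vert K L) :
    residue K L v = ZMod.castHom (dvd_mul_of_dvd_left (by norm_num : 3 ∣ 6) L) (ZMod 3) v.1.2 :=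
  rfl

lemma residue_eq_iff (v : Vert K L) (r : ZMod 3) : residue K L v = r ↔ v.1.2.val % 3 = r.val := by
  rw [← ZMod.val_castHom (dvd_mul_of_dvd_left (by norm_num : 3 ∣ 6) L), ← residue_apply]
  exact ZMod.val_injective 3 |>.eq_iff.symm

@[simp] lemma residue_e₁ : residue K L (e₁ K L) = 1 := by rw [residue_apply]; exact map_one _

@[simp] lemma residue_e₂ : residue K L (e₂ K L) = 1 := by rw [residue_apply]; exact map_one _

lemma residue_ne_of_adj {v w : Vert K L} (h : Adj K L v w) : residue K L v ≠ residue K L w := by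
  simp only [residue_apply]
  rcases h with ⟨-, h | h⟩ | ⟨-, h | h⟩ <;> rw [h, ← sub_ne_zero] <;>
    simp only [map_add, map_sub, map_one, map_ofNat, sub_add_cancel_left, sub_sub_cancel,
      neg_ne_zero] <;> decide

def residueCfg (r : ZMod 3) : Cfg K L := fun v => decide (residue K L v = r)

lemma confA_eq : confA K L = residueCfg K L 0 := by
  funext v; simp [confA, residueCfg, residue_eq_iff]

lemma confB_eq : confB K L = residueCfg K L 1 := by
  funext v; simp [confB, residueCfg, residue_eq_iff, ZMod.val_one]

lemma confC_eq : confC K L = residueCfg K L 2 := by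
  funext v; simp [confC, residueCfg, residue_eq_iff]; rfl

lemma hardCore_residueCfg (r : ZMod 3) : HardCore K L (residueCfg K L r) := by
  rintro v w hvw ⟨hv, hw⟩
  simp only [residueCfg, decide_eq_true_eq] at hv hw
  exact residue_ne_of_adj K L hvw (hv.trans hw.symm)

lemma card_residue_fiber (r : ZMod 3) : #{v | residue K L v = r} = 2 * K * L := by
  have hsurj : Function.Surjective (residue K L) := fun r =>
    ⟨r.val • e₁ K L, by simp⟩
  have hfib : ∀ s, #{v | residue K L v = s} = #{v | residue K L v = r} := fun s =>
    AddMonoidHom.card_fiber_eq_of_mem_range _ (hsurj s) (hsurj r)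
  have h := card_eq_sum_card_fiberwise (s := univ) (t := univ) (fun v _ => mem_univ (residue K L v))
  simp only [card_univ, card_vert, hfib, sum_const, ZMod.card, smul_eq_mul] at h
  linarith

lemma energy_residueCfg (r : ZMod 3) : energy K L (residueCfg K L r) = -(2 * K * L : ℤ) := by
  simp [energy, nParticles, residueCfg, card_residue_fiber]

section Triangles

variable {α : Type*} [AddGroup α] [Fintype α] (f : α → ℕ) (a b : α)

lemma sum_triangle : ∑ v, (f v + f (v + a) + f (v + b)) = 3 * ∑ v, f v := by
  rw [sum_add_distrib, sum_add_distrib,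
    Fintype.sum_equiv (Equiv.addRight a) (fun v => f (v + a)) f fun _ => rfl,
    Fintype.sum_equiv (Equiv.addRight b) (fun v => f (v + b)) f fun _ => rfl]
  ring

variable {f a b}

lemma three_mul_sum_le_card (h : ∀ v, f v + f (v + a) + f (v + b) ≤ 1) :
    3 * ∑ v, f v ≤ Fintype.card α := by
  simpa [sum_triangle] using sum_le_sum fun v (_ : v ∈ univ) => h v

lemma triangle_eq_one_of_three_mul_sum_eq_card (h : ∀ v, f v + f (v + a) + f (v + b) ≤ 1)
    (heq : 3 * ∑ v, f v = Fintype.card α) (v : α) : f v + f (v + a) + f (v + b) = 1 := by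
  have hsum : ∑ v, (f v + f (v + a) + f (v + b)) = ∑ _v : α, 1 := by
    simp [sum_triangle, heq]
  exact (sum_eq_sum_iff_of_le fun v _ => h v).1 hsum v (mem_univ v)

end Triangles

section Periods

variable {α β : Type*} [AddGroup α]

def periods (f : α → β) : AddSubgroup α where
  carrier := {g | ∀ v, f (v + g) = f v}
  zero_mem' := by simp
  add_mem' {g h} hg hh v := by rw [← add_assoc, hh, hg]
  neg_mem' {g} hg v := by rw [← hg (v + -g), neg_add_cancel_right]

lemma mem_periods_of_forall_imp [Fintype α] {p : α → Bool} {g : α}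
    (h : ∀ v, p v = true → p (v + g) = true) : g ∈ periods p := by
  -- `v ↦ v + g` maps the finite set `S` injectively into itself, hence onto it.
  set S : Finset α := {v | p v = true}
  have hS : S.map (Equiv.addRight g).toEmbedding = S :=
    map_eq_of_subset fun w hw => by
      obtain ⟨v, hv, rfl⟩ := mem_map.1 hw
      simpa [S] using h v (by simpa [S] using hv)
  intro v
  refine Bool.eq_iff_iff.2 ⟨fun hvg => ?_, h v⟩
  have : v + g ∈ S.map (Equiv.addRight g).toEmbedding := by rw [hS]; simpa [S] using hvg
  obtain ⟨w, hw, hwv⟩ := mem_map.1 this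
  simp only [Equiv.coe_toEmbedding, Equiv.coe_addRight, add_left_inj] at hwv
  simpa [S, hwv] using hw

end Periods

variable {K L}

lemma sum_toNat_eq_nParticles (σ : Cfg K L) : ∑ v, (σ v).toNat = nParticles K L σ := by
  rw [nParticles, card_filter]
  exact sum_congr rfl fun v _ => by cases σ v <;> rfl

lemma eq_false_of_adj {σ : Cfg K L} (hσ : HardCore K L σ) {v w : Vert K L} (hvw : Adj K L v w)
    (hv : σ v = true) : σ w = false := by
  simpa [hv] using hσ v w hvw

lemma toNat_add_toNat_add_toNat_le_one {σ : Cfg K L} (hσ : HardCore K L σ) {u v w : Vert K L}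
    (huv : Adj K L u v) (huw : Adj K L u w) (hvw : Adj K L v w) :
    (σ u).toNat + (σ v).toNat + (σ w).toNat ≤ 1 := by
  have huv' := hσ u v huv
  have huw' := hσ u w huw
  have hvw' := hσ v w hvw
  revert huv' huw' hvw'
  cases σ u <;> cases σ v <;> cases σ w <;> decide

lemma upTriangle_le_one {σ : Cfg K L} (hσ : HardCore K L σ) (v : Vert K L) :
    (σ v).toNat + (σ (v + e₁ K L)).toNat + (σ (v + (e₁ K L + e₂ K L))).toNat ≤ 1 :=
  toNat_add_toNat_add_toNat_le_one hσ (adj_add_e₁ K L v) (adj_add_e₁_add_e₂ K L v)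
    (by rw [← add_assoc]; exact adj_add_e₂ K L _)

lemma downTriangle_le_one {σ : Cfg K L} (hσ : HardCore K L σ) (v : Vert K L) :
    (σ v).toNat + (σ (v + e₂ K L)).toNat + (σ (v + (e₁ K L + e₂ K L))).toNat ≤ 1 :=
  toNat_add_toNat_add_toNat_le_one hσ (adj_add_e₂ K L v) (adj_add_e₁_add_e₂ K L v)
    (by rw [add_comm (e₁ K L), ← add_assoc]; exact adj_add_e₁ K L _)

lemma nParticles_le {σ : Cfg K L} (hσ : HardCore K L σ) : nParticles K L σ ≤ 2 * K * L := by
  have h := three_mul_sum_le_card (upTriangle_le_one hσ)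
  rw [sum_toNat_eq_nParticles, card_vert] at h
  linarith

section Maximal

variable {σ : Cfg K L} (hσ : HardCore K L σ) (hmax : nParticles K L σ = 2 * K * L)
include hσ hmax

lemma add_mem_periods_of_maximal :
    e₁ K L + (e₁ K L + e₂ K L) ∈ periods σ ∧ e₂ K L + (e₁ K L + e₂ K L) ∈ periods σ := by
  have heq : 3 * ∑ v, (σ v).toNat = Fintype.card (Vert K L) := by
    rw [sum_toNat_eq_nParticles, card_vert, hmax]; ring
  have third : ∀ {a b c : Bool}, a.toNat + b.toNat + c.toNat = 1 → a = false → b = false →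
      c = true := by
    intro a b c h ha hb; subst ha hb; cases c <;> simp_all
  constructor <;> refine mem_periods_of_forall_imp fun v hv => ?_
  · have h := triangle_eq_one_of_three_mul_sum_eq_card (downTriangle_le_one hσ) heq (v + e₁ K L)
    rw [add_assoc v, add_assoc v] at h
    exact third h (eq_false_of_adj hσ (adj_add_e₁ K L v) hv)
      (eq_false_of_adj hσ (adj_add_e₁_add_e₂ K L v) hv)
  · have h := triangle_eq_one_of_three_mul_sum_eq_card (upTriangle_le_one hσ) heq (v + e₂ K L)
    rw [add_assoc v, add_assoc v, add_comm (e₂ K L)] at h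
    exact third h (eq_false_of_adj hσ (adj_add_e₂ K L v) hv)
      (eq_false_of_adj hσ (adj_add_e₁_add_e₂ K L v) hv)

end Maximal

lemma exists_zsmul_add_zsmul_eq_of_residue_eq_zero {d : Vert K L} (hd : residue K L d = 0) :
    ∃ k m : ℤ, k • (e₁ K L + (e₁ K L + e₂ K L)) + m • (e₂ K L + (e₁ K L + e₂ K L)) = d := by
  have h3 : d.1.2.val % 3 = 0 := (residue_eq_iff K L d 0).1 hd
  have hpar : (d.1.1.val + d.1.2.val) % 2 = 0 := d.2
  -- `d = (A, 3t)` with `A + t = 2s`, and `d = s • (1, 3) + (s - A) • (-1, 3)`.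
  obtain ⟨t, ht⟩ : ∃ t, d.1.2.val = 3 * t :=
    ⟨_, (Nat.mul_div_cancel' (Nat.dvd_of_mod_eq_zero h3)).symm⟩
  obtain ⟨s, hs⟩ : ∃ s, d.1.1.val + t = 2 * s := ⟨(d.1.1.val + t) / 2, by omega⟩
  have h1 : ((d.1.1.val : ℕ) : ZMod (2 * K)) = d.1.1 := ZMod.natCast_zmod_val _
  have h2 : ((d.1.2.val : ℕ) : ZMod (6 * L)) = d.1.2 := ZMod.natCast_zmod_val _
  have hs' : ((d.1.1.val + t : ℕ) : ZMod (6 * L)) = ((2 * s : ℕ) : ZMod (6 * L)) := by rw [hs]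
  rw [ht] at h2
  push_cast at h2 hs'
  refine ⟨s, s - d.1.1.val, Subtype.ext (Prod.ext ?_ ?_)⟩ <;>
    simp only [Vert.coe_add, Vert.coe_zsmul, e₁, e₂, Prod.smul_fst, Prod.smul_snd, Prod.fst_add,
      Prod.snd_add] <;> simp only [zsmul_eq_mul] <;> push_cast
  · linear_combination h1
  · linear_combination (-3) * hs' + h2

lemma eq_residueCfg_of_nParticles_eq {σ : Cfg K L} (hσ : HardCore K L σ)
    (hmax : nParticles K L σ = 2 * K * L) : ∃ r, σ = residueCfg K L r := by
  obtain ⟨v₀, hv₀⟩ : ∃ v₀, σ v₀ = true := by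
    have hpos : 0 < nParticles K L σ := by
      rw [hmax]; exact Nat.mul_pos (Nat.mul_pos two_pos (NeZero.pos K)) (NeZero.pos L)
    obtain ⟨v₀, hv₀⟩ := card_pos.1 hpos
    exact ⟨v₀, (mem_filter.1 hv₀).2⟩
  obtain ⟨hg₁, hg₂⟩ := add_mem_periods_of_maximal hσ hmax
  have hocc : ∀ w, residue K L w = residue K L v₀ → σ w = true := by
    intro w hw
    obtain ⟨k, m, hkm⟩ := exists_zsmul_add_zsmul_eq_of_residue_eq_zero (d := w - v₀) (by simp [hw])
    have hper : w - v₀ ∈ periods σ := hkm ▸ add_mem (zsmul_mem hg₁ k) (zsmul_mem hg₂ m)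
    rw [← hv₀, ← hper v₀, add_sub_cancel]
  refine ⟨residue K L v₀, funext fun w => ?_⟩
  by_cases hw : residue K L w = residue K L v₀
  · simp [residueCfg, hw, hocc w hw]
  have hnext : residue K L w + 1 = residue K L v₀ ∨ residue K L w = residue K L v₀ + 1 := by
    generalize residue K L w = a at hw ⊢
    generalize residue K L v₀ = b at hw ⊢
    revert a b; decide
  simp only [residueCfg, hw, decide_false]
  rcases hnext with h | h
  · simpa [hocc (w + e₁ K L) (by simp [h])] using hσ w _ (adj_add_e₁ K L w)
  · have hadj : Adj K L (w - e₁ K L) w := by simpa using adj_add_e₁ K L (w - e₁ K L)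
    simpa [hocc (w - e₁ K L) (by simp [h])] using hσ _ w hadj

theorem stable_configurations :
    HardCore K L (confA K L) ∧ HardCore K L (confB K L) ∧ HardCore K L (confC K L) ∧
    energy K L (confA K L) = -(2 * K * L : ℤ) ∧
    energy K L (confB K L) = -(2 * K * L : ℤ) ∧
    energy K L (confC K L) = -(2 * K * L : ℤ) ∧
    ∀ σ : Cfg K L, HardCore K L σ →
      σ ≠ confA K L → σ ≠ confB K L → σ ≠ confC K L →
      energy K L σ > -(2 * K * L : ℤ) := by
  rw [confA_eq, confB_eq, confC_eq]
  refine ⟨hardCore_residueCfg K L 0, hardCore_residueCfg K L 1, hardCore_residueCfg K L 2,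
    energy_residueCfg K L 0, energy_residueCfg K L 1, energy_residueCfg K L 2, ?_⟩
  intro σ hσ ha hb hc
  rcases (nParticles_le hσ).lt_or_eq with hlt | hmax
  · have hlt' : (nParticles K L σ : ℤ) < 2 * K * L := by exact_mod_cast hlt
    rw [energy]
    linarith
  · obtain ⟨r, rfl⟩ := eq_residueCfg_of_nParticles_eq hσ hmax
    have hr : ∀ r : ZMod 3, r = 0 ∨ r = 1 ∨ r = 2 := by decide
    rcases hr r with rfl | rfl | rfl <;> contradiction
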